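/- arXiv:1002.3385 — 3 statements merged into one kernel-verified Lean document; each statement's English description precedes it below -/
import Mathlib

section
/- The subgroup Γ₀(N) of SL(4,ℤ), consisting of matrices whose first row is congruent to (*,0,0,0) modulo N, contains an element of order 5 if and only if 25 does not divide N and every prime divisor p of N with p ≠ 5 satisfies p ≡ 1 (mod 5). -/
/-!
An element `g ≠ 1` of `SL(4, ℤ)` with `g⁵ = 1` has minimal polynomial `Φ₅ = 1 + X + X² + X³ + X⁴`
over `ℚ`, because `Φ₅` is irreducible of degree 4. If the first row of `g` is `(c, 0, 0, 0)` modulo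
`N`, the `(0, 0)` entry of `Φ₅(g) = 0` modulo `N` says `Φ₅(c) ≡ 0 (mod N)`. Conversely, if
`Φ₅(a) ≡ 0 (mod N)`, a suitable conjugate of the companion matrix of `Φ₅` lies in `Γ₀(N)`.
So everything reduces to deciding when `Φ₅` has a root modulo `N`. Modulo a prime `p ≠ 5` the roots
are the primitive fifth roots of unity, which exist iff `p ≡ 1 (mod 5)`, and they lift to every
power of `p` by Hensel's lemma because `Φ₅` is separable modulo `p`. Modulo `5` there is the root
`1`, modulo `25` there is none, and the Chinese remainder theorem combines coprime moduli.
-/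

open Polynomial Matrix

instance Nat.fact_prime_five : Fact (Nat.Prime 5) := ⟨by norm_num⟩

theorem RingHom.map_aeval_int {R S : Type*} [Ring R] [Ring S] (φ : R →+* S) (x : R) (f : ℤ[X]) :
    φ (aeval x f) = aeval (φ x) f :=
  (aeval_algHom_apply φ.toIntAlgHom x f).symm

namespace ZMod

theorem exists_aeval_eq_zero_of_dvd {f : ℤ[X]} {m n : ℕ} (hmn : m ∣ n) {x : ZMod n}
    (hx : aeval x f = 0) : ∃ y : ZMod m, aeval y f = 0 :=
  ⟨castHom hmn (ZMod m) x, by rw [← RingHom.map_aeval_int, hx, map_zero]⟩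

theorem exists_aeval_eq_zero_mul {f : ℤ[X]} {m n : ℕ} (hmn : m.Coprime n) {x : ZMod m}
    {y : ZMod n} (hx : aeval x f = 0) (hy : aeval y f = 0) :
    ∃ z : ZMod (m * n), aeval z f = 0 := by
  set e := chineseRemainder hmn
  refine ⟨e.symm (x, y), e.injective (Prod.ext ?_ ?_)⟩
  · change (RingHom.fst _ _).comp e.toRingHom _ = _
    rw [RingHom.map_aeval_int]
    simpa using hx
  · change (RingHom.snd _ _).comp e.toRingHom _ = _
    rw [RingHom.map_aeval_int]
    simpa using hy

theorem exists_aeval_eq_zero_of_simple_root {p : ℕ} [Fact p.Prime] {f : ℤ[X]} {x : ZMod p}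
    (hx : aeval x f = 0) (hx' : aeval x (derivative f) ≠ 0) (n : ℕ) :
    ∃ y : ZMod (p ^ n), aeval y f = 0 := by
  set a : ℤ_[p] := (x.val : ℤ_[p])
  have hred (g : ℤ[X]) : PadicInt.toZMod (aeval a g) = aeval x g := by
    simp [PadicInt.toZMod.map_aeval_int, a]
  have hlt : ‖aeval a f‖ < 1 := by
    rw [← PadicInt.mem_nonunits, ← IsLocalRing.mem_maximalIdeal, ← PadicInt.ker_toZMod,
      RingHom.mem_ker, hred, hx]
  have hone : ‖aeval a (derivative f)‖ = 1 := by
    rw [← PadicInt.isUnit_iff, ← IsLocalRing.notMem_maximalIdeal, ← PadicInt.ker_toZMod,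
      RingHom.mem_ker, hred]
    exact hx'
  obtain ⟨z, hz, -⟩ := hensels_lemma (F := f) (a := a) (by rw [hone, one_pow]; exact hlt)
  exact ⟨PadicInt.toZModPow n z, by rw [← RingHom.map_aeval_int, hz, map_zero]⟩

theorem neZero_natCast_of_prime_ne {p q : ℕ} [Fact p.Prime] (hq : q.Prime) (hpq : p ≠ q) :
    NeZero (q : ZMod p) :=
  ⟨by rw [Ne, natCast_eq_zero_iff, Nat.prime_dvd_prime_iff_eq Fact.out hq]; exact hpq⟩

theorem exists_aeval_cyclotomic_eq_zero_iff {p q : ℕ} [Fact p.Prime] [hq : Fact q.Prime]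
    (hpq : p ≠ q) : (∃ x : ZMod p, aeval x (cyclotomic q ℤ) = 0) ↔ q ∣ p - 1 := by
  have := neZero_natCast_of_prime_ne hq.out hpq
  have hroot (x : ZMod p) : aeval x (cyclotomic q ℤ) = 0 ↔ IsPrimitiveRoot x q := by
    rw [aeval_def, ← isRoot_cyclotomic_iff, IsRoot, ← map_cyclotomic_int q (ZMod p), eval_map,
      algebraMap_int_eq]
  simp only [hroot]
  constructor
  · rintro ⟨x, hx⟩
    rw [hx.eq_orderOf]
    exact orderOf_dvd_card_sub_one (hx.ne_zero hq.out.ne_zero)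
  · intro h
    obtain ⟨u, hu⟩ := exists_prime_orderOf_dvd_card q (by rwa [card_units p])
    exact ⟨u, IsPrimitiveRoot.coe_units_iff.2 (IsPrimitiveRoot.iff_orderOf.2 hu)⟩

theorem exists_aeval_cyclotomic_pow_eq_zero {p q : ℕ} [Fact p.Prime] [hq : Fact q.Prime]
    (hpq : p ≠ q) (hdvd : q ∣ p - 1) (n : ℕ) :
    ∃ x : ZMod (p ^ n), aeval x (cyclotomic q ℤ) = 0 := by
  have := neZero_natCast_of_prime_ne hq.out hpq
  obtain ⟨x, hx⟩ := (exists_aeval_cyclotomic_eq_zero_iff hpq).2 hdvd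
  refine exists_aeval_eq_zero_of_simple_root hx ?_ n
  rw [← aeval_map_algebraMap (ZMod p), map_cyclotomic] at hx
  have h := (separable_cyclotomic q (ZMod p)).aeval_derivative_ne_zero hx
  rwa [← map_cyclotomic q (algebraMap ℤ (ZMod p)), derivative_map, aeval_map_algebraMap] at h

end ZMod

theorem aeval_cyclotomic_five {R : Type*} [Ring R] (x : R) :
    aeval x (cyclotomic 5 ℤ) = 1 + x + x ^ 2 + x ^ 3 + x ^ 4 := by
  simp [cyclotomic_prime, Finset.sum_range_succ]

theorem exists_aeval_cyclotomic_five_eq_zero_iff (N : ℕ) :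
    (∃ x : ZMod N, aeval x (cyclotomic 5 ℤ) = 0) ↔
      ¬ 25 ∣ N ∧ ∀ p : ℕ, p.Prime → p ∣ N → p ≠ 5 → p % 5 = 1 := by
  constructor
  · rintro ⟨x, hx⟩
    refine ⟨fun h25 => ?_, fun p hp hpN hp5 => ?_⟩
    · obtain ⟨y, hy⟩ := ZMod.exists_aeval_eq_zero_of_dvd h25 hx
      rw [aeval_cyclotomic_five] at hy
      revert y hy
      decide
    · have := Fact.mk hp
      have h5 := (ZMod.exists_aeval_cyclotomic_eq_zero_iff hp5).1
        (ZMod.exists_aeval_eq_zero_of_dvd hpN hx)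
      have := hp.two_le
      omega
  · rintro ⟨h25, hN⟩
    induction N using Nat.recOnPosPrimePosCoprime with
    | zero => exact absurd (dvd_zero 25) h25
    | one => exact ⟨0, Subsingleton.elim _ _⟩
    | prime_pow p n hp hn =>
      have := Fact.mk hp
      by_cases hp5 : p = 5
      · subst hp5
        obtain rfl : n = 1 := by
          by_contra hn1
          exact h25 ((by norm_num : 25 ∣ 5 ^ 2).trans (pow_dvd_pow 5 (by omega)))
        exact ⟨1, by rw [aeval_cyclotomic_five]; rfl⟩
      · have := hN p hp (dvd_pow_self p hn.ne') hp5
        exact ZMod.exists_aeval_cyclotomic_pow_eq_zero hp5 (by have := hp.two_le; omega) n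
    | coprime a b _ _ hab iha ihb =>
      obtain ⟨x, hx⟩ := iha (fun h => h25 (h.mul_right b))
        (fun p hp hpa => hN p hp (hpa.mul_right b))
      obtain ⟨y, hy⟩ := ihb (fun h => h25 (h.mul_left a))
        (fun p hp hpb => hN p hp (hpb.mul_left a))
      exact ZMod.exists_aeval_eq_zero_mul hab hx hy

theorem minpoly_eq_cyclotomic_of_pow_eq_one {A : Type*} [Ring A] [Algebra ℚ A] {p : ℕ}
    [hp : Fact p.Prime] {a : A} (ha : IsIntegral ℚ a) (hdeg : (minpoly ℚ a).natDegree ≤ p - 1)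
    (hpow : a ^ p = 1) (hne : a ≠ 1) : minpoly ℚ a = cyclotomic p ℚ := by
  have hdvd : minpoly ℚ a ∣ cyclotomic p ℚ * (X - 1) :=
    minpoly.dvd ℚ a (by simp [cyclotomic_prime_mul_X_sub_one, hpow])
  by_cases hcyc : cyclotomic p ℚ ∣ minpoly ℚ a
  · exact eq_of_monic_of_dvd_of_natDegree_le (cyclotomic.monic p ℚ) (minpoly.monic ha) hcyc
      (by rwa [natDegree_cyclotomic, Nat.totient_prime hp.out])
  · have hcop := ((cyclotomic.irreducible_rat hp.out.pos).coprime_iff_not_dvd).2 hcyc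
    have hX : minpoly ℚ a ∣ X - 1 := hcop.symm.dvd_of_dvd_mul_left hdvd
    refine absurd (sub_eq_zero.1 ?_) hne
    simpa using aeval_eq_zero_of_dvd_aeval_eq_zero hX (minpoly.aeval ℚ a)

namespace Matrix

variable {n : Type*} [Fintype n] [DecidableEq n]

theorem aeval_cyclotomic_eq_zero_of_pow_eq_one {p : ℕ} [Fact p.Prime]
    (hcard : Fintype.card n ≤ p - 1) {M : Matrix n n ℤ} (hpow : M ^ p = 1) (hne : M ≠ 1) :
    aeval M (cyclotomic p ℤ) = 0 := by
  set φ := (Algebra.ofId ℤ ℚ).mapMatrix (m := n)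
  have hφ : Function.Injective φ := Matrix.map_injective Int.cast_injective
  have hdeg : (minpoly ℚ (φ M)).natDegree ≤ p - 1 :=
    (natDegree_le_of_dvd (minpoly_dvd_charpoly (φ M)) (charpoly_monic _).ne_zero).trans
      (by simpa using hcard)
  have hmin := minpoly_eq_cyclotomic_of_pow_eq_one (IsIntegral.of_finite ℚ (φ M)) hdeg
    (by rw [← map_pow, hpow, map_one]) (by rwa [Ne, ← map_one φ, hφ.eq_iff])
  refine hφ ?_
  rw [← aeval_algHom_apply, map_zero, ← aeval_map_algebraMap ℚ, map_cyclotomic, ← hmin,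
    minpoly.aeval]

theorem pow_row_eq_single {R : Type*} [CommRing R] {B : Matrix n n R} {i : n}
    (hB : B i = Pi.single i (B i i)) (k : ℕ) : (B ^ k) i = Pi.single i (B i i ^ k) := by
  induction k with
  | zero => ext j; simp [one_apply, Pi.single_apply, eq_comm]
  | succ k ih =>
    rw [pow_succ]
    change (B ^ k) i ᵥ* B = _
    rw [ih, single_vecMul, row, hB, ← Pi.single_smul, smul_eq_mul, Pi.single_eq_same, pow_succ]

theorem aeval_apply_self_of_row_eq_single {R S : Type*} [CommRing R] [CommSemiring S]
    [Algebra S R] {B : Matrix n n R} {i : n} (hB : B i = Pi.single i (B i i)) (f : S[X]) :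
    aeval B f i i = aeval (B i i) f := by
  have hpow (k : ℕ) : (B ^ k) i i = B i i ^ k := by simp [pow_row_eq_single hB]
  simp [aeval_eq_sum_range, sum_apply, hpow]

theorem aeval_zmod_apply_self_eq_zero {N : ℕ} {f : ℤ[X]} {M : Matrix n n ℤ} {i : n}
    (hrow : ∀ j ≠ i, (N : ℤ) ∣ M i j) (hM : aeval M f = 0) : aeval (M i i : ZMod N) f = 0 := by
  set B := (Algebra.ofId ℤ (ZMod N)).mapMatrix M
  have hB : B i = Pi.single i (B i i) := by
    ext j
    rcases eq_or_ne j i with rfl | hj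
    · simp
    · simpa [B, hj] using (ZMod.intCast_zmod_eq_zero_iff_dvd _ N).2 (hrow j hj)
  have h := aeval_apply_self_of_row_eq_single hB f
  rw [aeval_algHom_apply, hM, map_zero] at h
  simpa [B] using h.symm

end Matrix

def shear (x y z : ℤ) : Matrix (Fin 4) (Fin 4) ℤ :=
  !![1, x, y, z; 0, 1, 0, 0; 0, 0, 1, 0; 0, 0, 0, 1]

theorem shear_mul_shear (x y z x' y' z' : ℤ) :
    shear x y z * shear x' y' z' = shear (x + x') (y + y') (z + z') := by
  ext i j
  fin_cases i <;> fin_cases j <;> simp [shear, mul_apply, Fin.sum_univ_four] <;> ring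

theorem shear_zero : shear 0 0 0 = 1 := by
  ext i j
  fin_cases i <;> fin_cases j <;> rfl

theorem det_shear (x y z : ℤ) : (shear x y z).det = 1 := by
  simp [shear, det_succ_row_zero, Fin.sum_univ_succ]

def companion : Matrix (Fin 4) (Fin 4) ℤ :=
  !![0, 0, 0, -1; 1, 0, 0, -1; 0, 1, 0, -1; 0, 0, 1, -1]

theorem det_companion : companion.det = 1 := by
  simp [companion, det_succ_row_zero, Fin.sum_univ_succ, Fin.succAbove]

theorem companion_pow_five : companion ^ 5 = 1 := by decide

theorem companion_ne_one : companion ≠ 1 := by decide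

def shearSL (x y z : ℤ) : Matrix.SpecialLinearGroup (Fin 4) ℤ := ⟨shear x y z, det_shear x y z⟩

theorem shearSL_inv (x y z : ℤ) : (shearSL x y z)⁻¹ = shearSL (-x) (-y) (-z) :=
  inv_eq_of_mul_eq_one_right <| Subtype.ext <| by
    change shear x y z * shear (-x) (-y) (-z) = 1
    rw [shear_mul_shear, add_neg_cancel, add_neg_cancel, add_neg_cancel, shear_zero]

def companionSL : Matrix.SpecialLinearGroup (Fin 4) ℤ := ⟨companion, det_companion⟩

-- The first row `w = (1, a, a², a³)` of the shear satisfies `w * companion = a • w - Φ₅(a) • e₃`,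
-- so the conjugate has first row `(a, 0, 0, -Φ₅(a))`.
def companionConj (a : ℤ) : Matrix.SpecialLinearGroup (Fin 4) ℤ :=
  shearSL a (a ^ 2) (a ^ 3) * companionSL * (shearSL a (a ^ 2) (a ^ 3))⁻¹

theorem companionConj_pow_five (a : ℤ) : companionConj a ^ 5 = 1 := by
  have : companionSL ^ 5 = 1 := Subtype.ext companion_pow_five
  rw [companionConj, conj_pow, this, mul_one, mul_inv_cancel]

theorem companionConj_ne_one (a : ℤ) : companionConj a ≠ 1 := by
  have : companionSL ≠ 1 := fun h => companion_ne_one (congrArg Subtype.val h)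
  simpa [companionConj, mul_inv_eq_one, mul_eq_left] using this

theorem coe_companionConj (a : ℤ) : (companionConj a : Matrix (Fin 4) (Fin 4) ℤ) =
    shear a (a ^ 2) (a ^ 3) * companion * shear (-a) (-a ^ 2) (-a ^ 3) := by
  rw [companionConj, shearSL_inv]
  rfl

theorem companionConj_row_zero (a : ℤ) : (companionConj a : Matrix (Fin 4) (Fin 4) ℤ) 0 =
    ![a, 0, 0, -(1 + a + a ^ 2 + a ^ 3 + a ^ 4)] := by
  rw [coe_companionConj]
  ext j
  fin_cases j <;> simp [shear, companion, mul_apply, Fin.sum_univ_four] <;> ring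

theorem gamma0_SL4_has_order_five_element_iff_general (N : ℕ) :
    (∃ g : Matrix.SpecialLinearGroup (Fin 4) ℤ,
      (∀ j : Fin 4, j ≠ 0 → (N : ℤ) ∣ (g : Matrix (Fin 4) (Fin 4) ℤ) 0 j) ∧
      g ^ 5 = 1 ∧ g ≠ 1) ↔
    ¬ (25 ∣ N) ∧ ∀ p : ℕ, p.Prime → p ∣ N → p ≠ 5 → p % 5 = 1 := by
  rw [← exists_aeval_cyclotomic_five_eq_zero_iff]
  constructor
  · rintro ⟨g, hrow, hpow, hne⟩
    have hΦ : aeval (g : Matrix (Fin 4) (Fin 4) ℤ) (cyclotomic 5 ℤ) = 0 :=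
      aeval_cyclotomic_eq_zero_of_pow_eq_one (by simp) (congrArg Subtype.val hpow)
        (fun h => hne (Subtype.ext h))
    exact ⟨_, aeval_zmod_apply_self_eq_zero hrow hΦ⟩
  · rintro ⟨x, hx⟩
    set a : ℤ := x.cast
    have hdvd : (N : ℤ) ∣ 1 + a + a ^ 2 + a ^ 3 + a ^ 4 := by
      rw [← ZMod.intCast_zmod_eq_zero_iff_dvd]
      push_cast [a, ZMod.intCast_zmod_cast]
      rw [← aeval_cyclotomic_five, hx]
    refine ⟨companionConj a, fun j hj => ?_, companionConj_pow_five a, companionConj_ne_one a⟩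
    rw [companionConj_row_zero]
    fin_cases j
    · exact absurd rfl hj
    · simp
    · simp
    · exact dvd_neg.2 hdvd

/-- The matrix `Z`, companion matrix of `x⁴+x³+x²+x+1`. -/
theorem gamma0_SL4_has_order_five_element_iff (N : ℕ) (hN : 1 ≤ N) :
    (∃ g : Matrix.SpecialLinearGroup (Fin 4) ℤ,
      (∀ j : Fin 4, j ≠ 0 → (N : ℤ) ∣ (g : Matrix (Fin 4) (Fin 4) ℤ) 0 j) ∧
      g ^ 5 = 1 ∧ g ≠ 1) ↔
    ¬ (25 ∣ N) ∧ ∀ p : ℕ, p.Prime → p ∣ N → p ≠ 5 → p % 5 = 1 :=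
  gamma0_SL4_has_order_five_element_iff_general N
end

section
/- For an integer N ≥ 1, there exists an integer a with 1 + a + a² + a³ + a⁴ ≡ 0 (mod N) if and only if 25 does not divide N and every prime divisor p of N with p ≠ 5 satisfies p ≡ 1 (mod 5). -/
/-!
A root of `Φ₅` modulo a prime `p ≠ 5` is a primitive fifth root of unity in `𝔽_p`, so it exists
exactly when `5 ∣ p - 1`. Such a root `b` lifts to the root `b ^ p ^ k` modulo `p ^ (k + 1)`:
`(b ^ p ^ k) ^ 5 ≡ 1 [ZMOD p ^ (k + 1)]` by lifting the exponent, and `b ^ p ^ k - 1 ≡ b - 1` is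
prime to `p`. Modulo `5` the root is `a = 1`, but `Φ₅` has no root modulo `25`. The Chinese
remainder theorem glues the prime powers together.
-/

open Polynomial

theorem IsCoprime.exists_dvd_sub_and_dvd_sub {R : Type*} [CommRing R] {m n : R}
    (h : IsCoprime m n) (a b : R) : ∃ c, m ∣ c - a ∧ n ∣ c - b := by
  obtain ⟨u, v, huv⟩ := h
  refine ⟨a * (v * n) + b * (u * m), ⟨(b - a) * u, ?_⟩, ⟨(a - b) * v, ?_⟩⟩
  · linear_combination a * huv
  · linear_combination b * huv

namespace Polynomial

theorem dvd_eval_of_dvd_sub {R : Type*} [CommRing R] {f : R[X]} {m a c : R} (hc : m ∣ c - a)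
    (ha : m ∣ f.eval a) : m ∣ f.eval c := by
  simpa using (hc.trans (sub_dvd_eval_sub c a f)).add ha

theorem exists_mul_dvd_eval_of_isCoprime {R : Type*} [CommRing R] {f : R[X]} {m n a b : R}
    (h : IsCoprime m n) (ha : m ∣ f.eval a) (hb : n ∣ f.eval b) : ∃ c, m * n ∣ f.eval c := by
  obtain ⟨c, hca, hcb⟩ := h.exists_dvd_sub_and_dvd_sub a b
  exact ⟨c, h.mul_dvd (dvd_eval_of_dvd_sub hca ha) (dvd_eval_of_dvd_sub hcb hb)⟩

theorem exists_dvd_eval_of_forall_prime_pow {f : ℤ[X]} {N : ℕ} (hN : N ≠ 0)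
    (h : ∀ p k : ℕ, p.Prime → 0 < k → p ^ k ∣ N → ∃ a, ((p ^ k : ℕ) : ℤ) ∣ f.eval a) :
    ∃ a, (N : ℤ) ∣ f.eval a := by
  induction N using Nat.recOnPosPrimePosCoprime with
  | prime_pow p k hp hk => exact h p k hp hk dvd_rfl
  | zero => exact absurd rfl hN
  | one => exact ⟨0, by simp⟩
  | coprime m n hm hn hmn ihm ihn =>
    obtain ⟨a, ha⟩ := ihm (by omega) fun p k hp hk hpk => h p k hp hk (hpk.mul_right n)
    obtain ⟨b, hb⟩ := ihn (by omega) fun p k hp hk hpk => h p k hp hk (hpk.mul_left m)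
    simpa using exists_mul_dvd_eval_of_isCoprime (Nat.isCoprime_iff_coprime.2 hmn) ha hb

theorem eval_cyclotomic_five {R : Type*} [CommRing R] (x : R) :
    (cyclotomic 5 R).eval x = 1 + x + x ^ 2 + x ^ 3 + x ^ 4 := by
  have : Fact (Nat.Prime 5) := ⟨Nat.prime_five⟩
  simp [cyclotomic_prime, Finset.sum_range_succ]

theorem intCast_dvd_eval_iff_isRoot_map {n : ℕ} {f : ℤ[X]} {a : ℤ} :
    (n : ℤ) ∣ f.eval a ↔ (f.map (Int.castRingHom (ZMod n))).IsRoot a := by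
  rw [IsRoot.def, eval_intCast_map, Int.coe_castRingHom, Int.cast_id,
    ZMod.intCast_zmod_eq_zero_iff_dvd]

theorem not_dvd_eval_cyclotomic_five (a : ℤ) : ¬ (25 : ℤ) ∣ (cyclotomic 5 ℤ).eval a := by
  rw [show (25 : ℤ) = (25 : ℕ) by rfl, intCast_dvd_eval_iff_isRoot_map, map_cyclotomic_int,
    IsRoot.def, eval_cyclotomic_five]
  generalize (a : ZMod 25) = x
  revert x
  decide

theorem modEq_one_of_dvd_eval_cyclotomic {n p : ℕ} [Fact p.Prime] (hpn : ¬ p ∣ n) {a : ℤ}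
    (h : (p : ℤ) ∣ (cyclotomic n ℤ).eval a) : p ≡ 1 [MOD n] := by
  rw [intCast_dvd_eval_iff_isRoot_map, map_cyclotomic_int] at h
  have : NeZero (n : ZMod p) := NeZero.of_not_dvd (ZMod p) hpn
  have hprim := isRoot_cyclotomic_iff.1 h
  have hn : n ≠ 0 := by rintro rfl; exact hpn (dvd_zero p)
  have hdvd := ZMod.orderOf_dvd_card_sub_one (hprim.ne_zero hn)
  rw [← hprim.eq_orderOf] at hdvd
  exact ((Nat.modEq_iff_dvd' (Fact.out : p.Prime).pos).2 hdvd).symm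

theorem exists_dvd_eval_cyclotomic_of_modEq_one {ℓ p : ℕ} [Fact ℓ.Prime] [Fact p.Prime]
    (h : p ≡ 1 [MOD ℓ]) : ∃ b : ℤ, (p : ℤ) ∣ (cyclotomic ℓ ℤ).eval b := by
  have hcard : ℓ ∣ Fintype.card (ZMod p)ˣ := by
    rw [ZMod.card_units]
    exact (Nat.modEq_iff_dvd' (Fact.out : p.Prime).one_le).1 h.symm
  obtain ⟨x, hx⟩ := exists_prime_orderOf_dvd_card ℓ hcard
  have hprim : IsPrimitiveRoot (x : ZMod p) ℓ := by
    rw [IsPrimitiveRoot.iff_orderOf, orderOf_units, hx]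
  obtain ⟨b, hb⟩ := ZMod.intCast_surjective (x : ZMod p)
  refine ⟨b, intCast_dvd_eval_iff_isRoot_map.2 ?_⟩
  rw [map_cyclotomic_int, hb]
  exact hprim.isRoot_cyclotomic (Fact.out : ℓ.Prime).pos

theorem pow_succ_dvd_eval_cyclotomic_pow {ℓ p : ℕ} [Fact ℓ.Prime] [hp : Fact p.Prime]
    (hpℓ : p ≠ ℓ) {b : ℤ} (hb : (p : ℤ) ∣ (cyclotomic ℓ ℤ).eval b) (k : ℕ) :
    (p : ℤ) ^ (k + 1) ∣ (cyclotomic ℓ ℤ).eval (b ^ p ^ k) := by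
  have key (x : ℤ) : (x - 1) * (cyclotomic ℓ ℤ).eval x = x ^ ℓ - 1 := by
    simpa [mul_comm] using congrArg (eval x) (cyclotomic_prime_mul_X_sub_one ℤ ℓ)
  have hlift : (p : ℤ) ^ (k + 1) ∣ (b ^ p ^ k - 1) * (cyclotomic ℓ ℤ).eval (b ^ p ^ k) := by
    rw [key, ← pow_mul, mul_comm, pow_mul]
    have hbℓ : (p : ℤ) ∣ b ^ ℓ - 1 := (key b).symm ▸ hb.mul_left _
    simpa using dvd_sub_pow_of_dvd_sub (b := (1 : ℤ)) (by simpa using hbℓ) k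
  have hb1 : ¬ (p : ℤ) ∣ b - 1 := by
    intro h
    have := dvd_eval_of_dvd_sub (dvd_sub_comm.1 h) hb
    rw [eval_one_cyclotomic_prime, Int.natCast_dvd_natCast,
      Nat.prime_dvd_prime_iff_eq hp.out Fact.out] at this
    exact hpℓ this
  have hfermat : (p : ℤ) ∣ b ^ p ^ k - b := by
    rw [← ZMod.intCast_zmod_eq_zero_iff_dvd]
    push_cast
    rw [ZMod.pow_card_pow, sub_self]
  have hbk1 : ¬ (p : ℤ) ∣ b ^ p ^ k - 1 := fun h => hb1 (by simpa using h.sub hfermat)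
  have hcop := (Nat.prime_iff_prime_int.1 hp.out).coprime_iff_not_dvd.2 hbk1
  exact hcop.pow_left.dvd_of_dvd_mul_left hlift

end Polynomial

theorem cyclotomic_five_solvable_mod_N_iff_general (N : ℕ) :
    (∃ a : ℤ, (N : ℤ) ∣ 1 + a + a ^ 2 + a ^ 3 + a ^ 4) ↔
    ¬ (25 ∣ N) ∧ ∀ p : ℕ, p.Prime → p ∣ N → p ≠ 5 → p % 5 = 1 := by
  have : Fact (Nat.Prime 5) := ⟨Nat.prime_five⟩
  simp only [← eval_cyclotomic_five]
  constructor
  · rintro ⟨a, ha⟩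
    refine ⟨fun h25 => not_dvd_eval_cyclotomic_five a ((Int.natCast_dvd_natCast.2 h25).trans ha),
      fun p hp hpN hp5 => ?_⟩
    have : Fact p.Prime := ⟨hp⟩
    exact modEq_one_of_dvd_eval_cyclotomic (mt (Nat.prime_dvd_prime_iff_eq hp Fact.out).1 hp5)
      ((Int.natCast_dvd_natCast.2 hpN).trans ha)
  · rintro ⟨h25, hmod⟩
    refine exists_dvd_eval_of_forall_prime_pow (by rintro rfl; exact h25 (dvd_zero 25))
      fun p k hp hk hpk => ?_
    have : Fact p.Prime := ⟨hp⟩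
    obtain rfl | hp5 := eq_or_ne p 5
    · have hk1 : k ≤ 1 := by
        by_contra! hk
        exact h25 ((pow_dvd_pow 5 hk).trans hpk)
      refine ⟨1, ?_⟩
      rw [eval_one_cyclotomic_prime]
      exact_mod_cast (pow_dvd_pow 5 hk1 : 5 ^ k ∣ 5 ^ 1)
    · obtain ⟨b, hb⟩ := exists_dvd_eval_cyclotomic_of_modEq_one (ℓ := 5)
        (hmod p hp ((dvd_pow_self p hk.ne').trans hpk) hp5)
      exact ⟨b ^ p ^ k, by
        exact_mod_cast (pow_dvd_pow _ k.le_succ).trans (pow_succ_dvd_eval_cyclotomic_pow hp5 hb k)⟩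

theorem cyclotomic_five_solvable_mod_N_iff (N : ℕ) (hN : 1 ≤ N) :
    (∃ a : ℤ, (N : ℤ) ∣ 1 + a + a ^ 2 + a ^ 3 + a ^ 4) ↔
    ¬ (25 ∣ N) ∧ ∀ p : ℕ, p.Prime → p ∣ N → p ≠ 5 → p % 5 = 1 :=
  cyclotomic_five_solvable_mod_N_iff_general N
end

section
/- Suppose the matrix Z (companion matrix of x⁴+x³+x²+x+1) satisfies v·Z ≡ λ·v (mod N) for some row vector v ∈ ℤ⁴ whose entries are coprime (v primitive) and some integer λ coprime to N. Then 1 + λ + λ² + λ³ + λ⁴ ≡ 0 (mod N). -/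
open Matrix

/-- The companion matrix of the fifth cyclotomic polynomial. -/
def Zmat : Matrix (Fin 4) (Fin 4) ℤ :=
  !![0, 0, 0, -1; 1, 0, 0, -1; 0, 1, 0, -1; 0, 0, 1, -1]

theorem eigenvector_mod_N_gives_cyclotomic_root (N : ℕ) (hN : 1 ≤ N)
    (v : Fin 4 → ℤ) (hv : Finset.univ.gcd v = 1)
    (l : ℤ) (hl : IsCoprime l (N : ℤ))
    (h : ∀ j : Fin 4, (N : ℤ) ∣ (Matrix.vecMul v Zmat j - l * v j)) :
    (N : ℤ) ∣ 1 + l + l ^ 2 + l ^ 3 + l ^ 4 := by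
  have E0 : Matrix.vecMul v Zmat 0 = v 1 := by
    show v ⬝ᵥ (fun i => Zmat i 0) = v 1
    rw [dotProduct, Fin.sum_univ_four]
    norm_num [show Zmat 0 0 = 0 from rfl, show Zmat 1 0 = 1 from rfl,
      show Zmat 2 0 = 0 from rfl, show Zmat 3 0 = 0 from rfl]
  have E1 : Matrix.vecMul v Zmat 1 = v 2 := by
    show v ⬝ᵥ (fun i => Zmat i 1) = v 2
    rw [dotProduct, Fin.sum_univ_four]
    norm_num [show Zmat 0 1 = 0 from rfl, show Zmat 1 1 = 0 from rfl,
      show Zmat 2 1 = 1 from rfl, show Zmat 3 1 = 0 from rfl]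
  have E2 : Matrix.vecMul v Zmat 2 = v 3 := by
    show v ⬝ᵥ (fun i => Zmat i 2) = v 3
    rw [dotProduct, Fin.sum_univ_four]
    norm_num [show Zmat 0 2 = 0 from rfl, show Zmat 1 2 = 0 from rfl,
      show Zmat 2 2 = 0 from rfl, show Zmat 3 2 = 1 from rfl]
  have E3 : Matrix.vecMul v Zmat 3 = -(v 0) - v 1 - v 2 - v 3 := by
    show v ⬝ᵥ (fun i => Zmat i 3) = -(v 0) - v 1 - v 2 - v 3
    rw [dotProduct, Fin.sum_univ_four]
    norm_num [show Zmat 0 3 = -1 from rfl, show Zmat 1 3 = -1 from rfl,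
      show Zmat 2 3 = -1 from rfl, show Zmat 3 3 = -1 from rfl]
    ring
  have h0 : (N : ℤ) ∣ v 1 - l * v 0 := by have := h 0; rwa [E0] at this
  have h1 : (N : ℤ) ∣ v 2 - l * v 1 := by have := h 1; rwa [E1] at this
  have h2 : (N : ℤ) ∣ v 3 - l * v 2 := by have := h 2; rwa [E2] at this
  have h3 : (N : ℤ) ∣ (-(v 0) - v 1 - v 2 - v 3) - l * v 3 := by
    have := h 3; rwa [E3] at this
  set Φ : ℤ := 1 + l + l ^ 2 + l ^ 3 + l ^ 4 with hΦ
  have key : ∀ i : Fin 4, (N : ℤ) ∣ Φ * v i := by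
    have k0 : (N : ℤ) ∣ Φ * v 0 := by
      have : Φ * v 0 = -((1 + l + l^2 + l^3) * (v 1 - l * v 0)
          + (1 + l + l^2) * (v 2 - l * v 1)
          + (1 + l) * (v 3 - l * v 2)
          + ((-(v 0) - v 1 - v 2 - v 3) - l * v 3)) := by rw [hΦ]; ring
      rw [this]
      exact dvd_neg.mpr (dvd_add (dvd_add (dvd_add (h0.mul_left _)
        (h1.mul_left _)) (h2.mul_left _)) h3)
    have k1 : (N : ℤ) ∣ Φ * v 1 := by
      have : Φ * v 1 = l * (Φ * v 0) + Φ * (v 1 - l * v 0) := by ring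
      rw [this]
      exact dvd_add (k0.mul_left _) (h0.mul_left _)
    have k2 : (N : ℤ) ∣ Φ * v 2 := by
      have : Φ * v 2 = l * (Φ * v 1) + Φ * (v 2 - l * v 1) := by ring
      rw [this]
      exact dvd_add (k1.mul_left _) (h1.mul_left _)
    have k3 : (N : ℤ) ∣ Φ * v 3 := by
      have : Φ * v 3 = l * (Φ * v 2) + Φ * (v 3 - l * v 2) := by ring
      rw [this]
      exact dvd_add (k2.mul_left _) (h2.mul_left _)
    intro i
    fin_cases i <;> assumption
  have hg : (N : ℤ) ∣ Finset.univ.gcd (fun i => Φ * v i) :=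
    Finset.dvd_gcd fun i _ => key i
  rw [Finset.gcd_mul_left, hv, mul_one] at hg
  exact (dvd_normalize_iff ..).mp hg
end
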